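/- Let a, b > 0 and give four bodies equal masses μ_1 = μ_2 = μ_3 = μ_4 = μ with 4μ = 1. Then there exist x > 0 and y > 0 such that the points p_1 = (x, y), p_2 = (x, −y), p_3 = (−x, −y), p_4 = (−x, y) satisfy the anisotropic central configuration equations (for every i, a x_i = Σ_{j≠i} μ_j (x_i − x_j)/r_{ij}³ and b y_i = Σ_{j≠i} μ_j (y_i − y_j)/r_{ij}³, where r_{ij} = |p_i − p_j|), i.e. they form a rectangle symmetric with respect to both coordinate axes. Moreover, writing x = r cos φ, y = r sin φ with r = √(x² + y²) and φ ∈ (0, π/2): (1) φ is the unique solution in (0, π/2) of tan³(φ)·(cos³(φ) + 1)/(sin³(φ) + 1) = a/b; (2) r > (μ/(2·min{a,b}))^{1/3}; and (3) in that range r is the unique solution of (μ/(4 a r³ − μ))^{2/3} + (μ/(4 b r³ − μ))^{2/3} = 1. -/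

import Mathlib

open Finset

abbrev E2 : Type := EuclideanSpace ℝ (Fin 2)

/-- The anisotropic central configuration equations for points `p_i = (x_i, y_i)`:
`a x_i = Σ_{j≠i} μ_j (x_i − x_j)/r_{ij}³` and `b y_i = Σ_{j≠i} μ_j (y_i − y_j)/r_{ij}³`. -/
def AnisoCC {k : ℕ} (a b : ℝ) (μ : Fin k → ℝ) (p : Fin k → E2) : Prop :=
  ∀ i, (a * p i 0 = ∑ j ∈ Finset.univ.filter (· ≠ i), μ j * (p i 0 - p j 0) / ‖p i - p j‖ ^ 3) ∧
       (b * p i 1 = ∑ j ∈ Finset.univ.filter (· ≠ i), μ j * (p i 1 - p j 1) / ‖p i - p j‖ ^ 3)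

/-- The point `(a, b)` of the Euclidean plane. -/
noncomputable def pt (a b : ℝ) : E2 := (WithLp.equiv 2 (Fin 2 → ℝ)).symm ![a, b]

/-! By the symmetry of the rectangle `(±x, ±y)` with half-diagonal `r`, all eight equations reduce
to `a = μ/4 (1/r³ + 1/x³)` and `b = μ/4 (1/r³ + 1/y³)`, i.e. in polar coordinates
`4 a r³ = μ (1 + cos⁻³ φ)` and `4 b r³ = μ (1 + sin⁻³ φ)`. Their quotient is the angle equation,
whose left side equals `(1 + cos⁻³ φ)/(1 + sin⁻³ φ)` and so increases strictly from `0` to `∞` on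
`(0, π/2)`; this gives `φ`, and then `r` from the first equation. Moreover
`μ/(4ar³ − μ) = cos³ φ` and `μ/(4br³ − μ) = sin³ φ`, so the radial equation is
`cos² φ + sin² φ = 1`, and its left side is strictly decreasing in `r`. -/

open Real Set

lemma pt_apply_zero (a b : ℝ) : pt a b 0 = a := rfl

lemma pt_apply_one (a b : ℝ) : pt a b 1 = b := rfl

lemma pt_sub_pt (a b c d : ℝ) : pt a b - pt c d = pt (a - c) (b - d) := by
  ext i; fin_cases i <;> rfl

lemma norm_pt (a b : ℝ) : ‖pt a b‖ = √(a ^ 2 + b ^ 2) := by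
  simp [EuclideanSpace.norm_eq, pt, Fin.sum_univ_two]

lemma anisoCC_rectangle {a b μ x y r : ℝ} (hx : 0 < x) (hy : 0 < y) (hr : 0 ≤ r)
    (hxy : x ^ 2 + y ^ 2 = r ^ 2) (ha : a = μ / 4 * (1 / r ^ 3 + 1 / x ^ 3))
    (hb : b = μ / 4 * (1 / r ^ 3 + 1 / y ^ 3)) :
    AnisoCC a b (fun _ : Fin 4 => μ) ![pt x y, pt x (-y), pt (-x) (-y), pt (-x) y] := by
  have hdx : √((2 * x) ^ 2) = 2 * x := sqrt_sq (by positivity)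
  have hdy : √((2 * y) ^ 2) = 2 * y := sqrt_sq (by positivity)
  have hdr : √((2 * x) ^ 2 + (2 * y) ^ 2) = 2 * r := by
    rw [← sqrt_sq (by positivity : 0 ≤ 2 * r)]
    congr 1
    linear_combination 4 * hxy
  subst ha hb
  intro i
  fin_cases i <;> constructor <;>
  · simp only [Finset.sum_filter, ne_eq, ite_not, Fin.sum_univ_four, Fin.reduceEq, Fin.reduceFinMk,
      Fin.mk_one, Fin.zero_eta, zero_ne_one, one_ne_zero, ↓reduceIte, Matrix.cons_val,
      Matrix.cons_val_zero, Matrix.cons_val_one, pt_sub_pt, norm_pt, pt_apply_zero, pt_apply_one,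
      sub_self, sub_neg_eq_add, neg_sub_left, neg_add_rev, neg_neg, neg_add_cancel, mul_neg,
      ← two_mul, even_two, Even.neg_pow, OfNat.ofNat_ne_zero, not_false_eq_true, zero_pow, add_zero,
      zero_add, mul_zero, zero_div, hdx, hdy, hdr]
    field_simp
    ring

lemma sin_pos_and_cos_pos {φ : ℝ} (hφ : φ ∈ Ioo 0 (π / 2)) : 0 < sin φ ∧ 0 < cos φ :=
  ⟨sin_pos_of_pos_of_lt_pi hφ.1 (by linarith [hφ.2, pi_pos]),
    cos_pos_of_mem_Ioo ⟨by linarith [hφ.1, pi_pos], hφ.2⟩⟩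

lemma anisoCC_polar_rectangle {a b μ r φ : ℝ} (hr : 0 < r) (hφ : φ ∈ Ioo 0 (π / 2))
    (hra : 4 * a * r ^ 3 = μ * (1 + (cos φ ^ 3)⁻¹))
    (hrb : 4 * b * r ^ 3 = μ * (1 + (sin φ ^ 3)⁻¹)) :
    AnisoCC a b (fun _ : Fin 4 => μ) ![pt (r * cos φ) (r * sin φ), pt (r * cos φ) (-(r * sin φ)),
      pt (-(r * cos φ)) (-(r * sin φ)), pt (-(r * cos φ)) (r * sin φ)] := by
  obtain ⟨hs, hc⟩ := sin_pos_and_cos_pos hφ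
  refine anisoCC_rectangle (by positivity) (by positivity) hr.le
    (by linear_combination r ^ 2 * sin_sq_add_cos_sq φ) ?_ ?_
  · field_simp at hra ⊢
    linear_combination hra
  · field_simp at hrb ⊢
    linear_combination hrb

lemma cbrt_pow_three {q : ℝ} (hq : 0 ≤ q) : (q ^ ((1 : ℝ) / 3)) ^ 3 = q := by
  rw [one_div, ← Nat.cast_ofNat, Real.rpow_inv_natCast_pow hq three_ne_zero]

lemma cbrt_lt_iff {q r : ℝ} (hq : 0 ≤ q) : q ^ ((1 : ℝ) / 3) < r ↔ q < r ^ 3 := by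
  rcases lt_or_ge r 0 with hr | hr
  · have : r ^ 3 < 0 := Odd.pow_neg (by decide) hr
    constructor <;> intro h <;> linarith [Real.rpow_nonneg hq ((1 : ℝ) / 3)]
  · rw [one_div, Real.rpow_inv_lt_iff_of_pos hq hr three_pos, ← Real.rpow_natCast]
    norm_num

lemma pow_three_rpow_two_thirds {c : ℝ} (hc : 0 ≤ c) : (c ^ 3) ^ ((2 : ℝ) / 3) = c ^ 2 := by
  rw [← Real.rpow_natCast_mul hc, ← Real.rpow_natCast]
  norm_num

noncomputable def angleRatio (φ : ℝ) : ℝ := tan φ ^ 3 * ((cos φ ^ 3 + 1) / (sin φ ^ 3 + 1))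

lemma angleRatio_eq {φ : ℝ} (hφ : φ ∈ Ioo 0 (π / 2)) :
    angleRatio φ = (1 + (cos φ ^ 3)⁻¹) / (1 + (sin φ ^ 3)⁻¹) := by
  obtain ⟨hs, hc⟩ := sin_pos_and_cos_pos hφ
  rw [angleRatio, tan_eq_sin_div_cos]
  field_simp

lemma strictMonoOn_angleRatio : StrictMonoOn angleRatio (Ioo 0 (π / 2)) := by
  intro φ hφ ψ hψ hlt
  obtain ⟨hsφ, hcφ⟩ := sin_pos_and_cos_pos hφ
  obtain ⟨hsψ, hcψ⟩ := sin_pos_and_cos_pos hψ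
  have hpi := pi_pos
  have hsin : sin φ ^ 3 < sin ψ ^ 3 := pow_lt_pow_left₀
    (strictMonoOn_sin ⟨by linarith [hφ.1], by linarith [hφ.2]⟩
      ⟨by linarith [hψ.1], by linarith [hψ.2]⟩ hlt) hsφ.le three_ne_zero
  have hcos : cos ψ ^ 3 < cos φ ^ 3 := pow_lt_pow_left₀
    (strictAntiOn_cos ⟨hφ.1.le, by linarith [hφ.2]⟩ ⟨hψ.1.le, by linarith [hψ.2]⟩ hlt)
      hcψ.le three_ne_zero
  rw [angleRatio_eq hφ, angleRatio_eq hψ]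
  exact div_lt_div₀ (by gcongr) (by gcongr) (by positivity) (by positivity)

lemma angleRatio_mem_Icc {φ : ℝ} (hφ : φ ∈ Ioo 0 (π / 2)) :
    angleRatio φ ∈ Set.Icc (tan φ ^ 3 / 2) (2 * tan φ ^ 3) := by
  obtain ⟨hs, hc⟩ := sin_pos_and_cos_pos hφ
  have ht : 0 < tan φ ^ 3 := by rw [tan_eq_sin_div_cos]; positivity
  have hs1 : sin φ ^ 3 ≤ 1 := pow_le_one₀ hs.le (sin_le_one φ)
  have hc1 : cos φ ^ 3 ≤ 1 := pow_le_one₀ hc.le (cos_le_one φ)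
  have hfac : (cos φ ^ 3 + 1) / (sin φ ^ 3 + 1) ∈ Set.Icc (1 / 2) 2 := by
    constructor
    · rw [le_div_iff₀ (by positivity)]; nlinarith [pow_pos hc 3]
    · rw [div_le_iff₀ (by positivity)]; nlinarith [pow_pos hs 3]
  constructor <;> rw [angleRatio] <;> nlinarith [hfac.1, hfac.2]

lemma continuousOn_angleRatio : ContinuousOn angleRatio (Ioo 0 (π / 2)) := by
  have hcos : Ioo 0 (π / 2) ⊆ {φ | cos φ ≠ 0} := fun φ hφ => (sin_pos_and_cos_pos hφ).2.ne'
  refine ((continuousOn_tan.mono hcos).pow 3).mul (ContinuousOn.div (by fun_prop) (by fun_prop) ?_)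
  intro φ hφ
  have := (sin_pos_and_cos_pos hφ).1
  positivity

lemma surjOn_angleRatio : SurjOn angleRatio (Ioo 0 (π / 2)) (Ioi 0) := by
  intro c (hc : 0 < c)
  have arctan_mem : ∀ {t : ℝ}, 0 < t → arctan t ∈ Ioo 0 (π / 2) :=
    fun ht => ⟨arctan_pos.2 ht, arctan_lt_pi_div_two _⟩
  set t₁ := (c / 4) ^ ((1 : ℝ) / 3)
  set t₂ := (4 * c) ^ ((1 : ℝ) / 3)
  have ht₁ : 0 < t₁ := rpow_pos_of_pos (by positivity) _
  have ht₂ : 0 < t₂ := rpow_pos_of_pos (by positivity) _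
  have hlow : angleRatio (arctan t₁) < c := by
    have := (angleRatio_mem_Icc (arctan_mem ht₁)).2
    rw [tan_arctan, cbrt_pow_three (by positivity)] at this
    linarith
  have hhigh : c < angleRatio (arctan t₂) := by
    have := (angleRatio_mem_Icc (arctan_mem ht₂)).1
    rw [tan_arctan, cbrt_pow_three (by positivity)] at this
    linarith
  have hsub : Set.Icc (arctan t₁) (arctan t₂) ⊆ Ioo 0 (π / 2) :=
    Icc_subset_Ioo (arctan_mem ht₁).1 (arctan_mem ht₂).2
  have hle : arctan t₁ ≤ arctan t₂ :=
    ((strictMonoOn_angleRatio.lt_iff_lt (arctan_mem ht₁) (arctan_mem ht₂)).1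
      (hlow.trans hhigh)).le
  obtain ⟨φ, hφ, hφc⟩ := intermediate_value_Ioo hle (continuousOn_angleRatio.mono hsub)
    ⟨hlow, hhigh⟩
  exact ⟨φ, hsub (Ioo_subset_Icc_self hφ), hφc⟩

lemma four_mul_cube_eq_of_angleRatio_eq {a b μ r φ : ℝ} (hφ : φ ∈ Ioo 0 (π / 2)) (ha : a ≠ 0)
    (hb : b ≠ 0) (h : angleRatio φ = a / b) (hra : 4 * a * r ^ 3 = μ * (1 + (cos φ ^ 3)⁻¹)) :
    4 * b * r ^ 3 = μ * (1 + (sin φ ^ 3)⁻¹) := by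
  obtain ⟨hs, -⟩ := sin_pos_and_cos_pos hφ
  rw [angleRatio_eq hφ, div_eq_div_iff (by positivity) hb] at h
  apply mul_left_cancel₀ ha
  linear_combination b * hra + μ * h

noncomputable def radialSum (a b μ r : ℝ) : ℝ :=
  (μ / (4 * a * r ^ 3 - μ)) ^ ((2 : ℝ) / 3) + (μ / (4 * b * r ^ 3 - μ)) ^ ((2 : ℝ) / 3)

lemma strictAntiOn_rpow_div_cube_sub {k μ p : ℝ} (hk : 0 < k) (hμ : 0 < μ) (hp : 0 < p) :
    StrictAntiOn (fun r => (μ / (k * r ^ 3 - μ)) ^ p) {r | μ < k * r ^ 3} := by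
  intro s hs t ht hst
  have hcube : k * s ^ 3 < k * t ^ 3 :=
    mul_lt_mul_of_pos_left (Odd.strictMono_pow (by decide) hst) hk
  have hs' : 0 < k * s ^ 3 - μ := sub_pos.2 hs
  exact Real.rpow_lt_rpow (div_pos hμ (by linarith)).le
    (div_lt_div_of_pos_left hμ hs' (by linarith)) hp

lemma cbrt_div_two_mul_min_lt_iff {a b μ r : ℝ} (ha : 0 < a) (hb : 0 < b) (hμ : 0 ≤ μ)
    (hr : 0 ≤ r) :
    (μ / (2 * min a b)) ^ ((1 : ℝ) / 3) < r ↔ μ < 2 * a * r ^ 3 ∧ μ < 2 * b * r ^ 3 := by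
  rw [cbrt_lt_iff (by positivity), div_lt_iff₀ (by positivity), mul_min_of_nonneg _ _ zero_le_two,
    mul_min_of_nonneg _ _ (by positivity), lt_min_iff, mul_comm (r ^ 3), mul_comm (r ^ 3)]

lemma injOn_radialSum {a b μ : ℝ} (ha : 0 < a) (hb : 0 < b) (hμ : 0 < μ) :
    InjOn (radialSum a b μ) {r | (μ / (2 * min a b)) ^ ((1 : ℝ) / 3) < r} := by
  set S := {r | μ < 4 * a * r ^ 3} ∩ {r | μ < 4 * b * r ^ 3}
  have hsub : {r | (μ / (2 * min a b)) ^ ((1 : ℝ) / 3) < r} ⊆ S := by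
    intro r (hr : _ < r)
    obtain ⟨h₁, h₂⟩ := (cbrt_div_two_mul_min_lt_iff ha hb hμ.le
      ((rpow_nonneg (by positivity) _).trans hr.le)).1 hr
    exact ⟨show μ < _ by linarith, show μ < _ by linarith⟩
  have hanti : StrictAntiOn (radialSum a b μ) S :=
    ((strictAntiOn_rpow_div_cube_sub (by positivity) hμ (by norm_num)).mono inter_subset_left).add
      ((strictAntiOn_rpow_div_cube_sub (by positivity) hμ (by norm_num)).mono inter_subset_right)
  exact hanti.injOn.mono hsub

lemma div_mul_cube_sub_eq {k μ r c : ℝ} (hμ : 0 < μ) (hc : 0 < c)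
    (h : k * r ^ 3 = μ * (1 + (c ^ 3)⁻¹)) : μ / (k * r ^ 3 - μ) = c ^ 3 := by
  rw [h]
  field_simp
  ring

lemma two_mul_lt_mul_cube {k μ r c : ℝ} (hμ : 0 < μ) (hc : 0 < c) (hc1 : c < 1)
    (h : k * r ^ 3 = μ * (1 + (c ^ 3)⁻¹)) : 2 * μ < k * r ^ 3 := by
  have : 1 < (c ^ 3)⁻¹ := one_lt_inv₀ (by positivity) |>.2 (pow_lt_one₀ hc.le hc1 three_ne_zero)
  rw [h]
  nlinarith

lemma cbrt_lt_and_radialSum_eq_one {a b μ r φ : ℝ} (ha : 0 < a) (hb : 0 < b) (hμ : 0 < μ)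
    (hr : 0 ≤ r) (hφ : φ ∈ Ioo 0 (π / 2)) (hra : 4 * a * r ^ 3 = μ * (1 + (cos φ ^ 3)⁻¹))
    (hrb : 4 * b * r ^ 3 = μ * (1 + (sin φ ^ 3)⁻¹)) :
    (μ / (2 * min a b)) ^ ((1 : ℝ) / 3) < r ∧ radialSum a b μ r = 1 := by
  obtain ⟨hs, hc⟩ := sin_pos_and_cos_pos hφ
  have hs1 : sin φ < 1 := by nlinarith [sin_sq_add_cos_sq φ]
  have hc1 : cos φ < 1 := by nlinarith [sin_sq_add_cos_sq φ]
  refine ⟨(cbrt_div_two_mul_min_lt_iff ha hb hμ.le hr).2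
    ⟨by linarith [two_mul_lt_mul_cube hμ hc hc1 hra],
      by linarith [two_mul_lt_mul_cube hμ hs hs1 hrb]⟩, ?_⟩
  rw [radialSum, div_mul_cube_sub_eq hμ hc hra, div_mul_cube_sub_eq hμ hs hrb,
    pow_three_rpow_two_thirds hc.le, pow_three_rpow_two_thirds hs.le, cos_sq_add_sin_sq]

theorem stmt18_general (a b μ : ℝ) (ha : 0 < a) (hb : 0 < b) (hμ : 0 < μ) :
    ∃ x > (0 : ℝ), ∃ y > (0 : ℝ),
      AnisoCC a b (fun _ : Fin 4 => μ) ![pt x y, pt x (-y), pt (-x) (-y), pt (-x) y] ∧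
      ∃ r > (0 : ℝ), ∃ φ ∈ Set.Ioo (0 : ℝ) (Real.pi / 2),
        x = r * Real.cos φ ∧ y = r * Real.sin φ ∧
        (Real.tan φ ^ 3 * ((Real.cos φ ^ 3 + 1) / (Real.sin φ ^ 3 + 1)) = a / b ∧
          ∀ φ' ∈ Set.Ioo (0 : ℝ) (Real.pi / 2),
            Real.tan φ' ^ 3 * ((Real.cos φ' ^ 3 + 1) / (Real.sin φ' ^ 3 + 1)) = a / b →
            φ' = φ) ∧
        ((μ / (2 * min a b)) ^ ((1 : ℝ) / 3) < r ∧
          (μ / (4 * a * r ^ 3 - μ)) ^ ((2 : ℝ) / 3) +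
            (μ / (4 * b * r ^ 3 - μ)) ^ ((2 : ℝ) / 3) = 1 ∧
          ∀ r' : ℝ, (μ / (2 * min a b)) ^ ((1 : ℝ) / 3) < r' →
            (μ / (4 * a * r' ^ 3 - μ)) ^ ((2 : ℝ) / 3) +
              (μ / (4 * b * r' ^ 3 - μ)) ^ ((2 : ℝ) / 3) = 1 →
            r' = r) := by
  obtain ⟨φ, hφ, hφab⟩ := surjOn_angleRatio (div_pos ha hb)
  obtain ⟨hs, hc⟩ := sin_pos_and_cos_pos hφ
  set r := (μ * (1 + (cos φ ^ 3)⁻¹) / (4 * a)) ^ ((1 : ℝ) / 3)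
  have hr : 0 < r := rpow_pos_of_pos (by positivity) _
  have hra : 4 * a * r ^ 3 = μ * (1 + (cos φ ^ 3)⁻¹) := by
    rw [cbrt_pow_three (by positivity)]
    field_simp
  have hrb := four_mul_cube_eq_of_angleRatio_eq hφ ha.ne' hb.ne' hφab hra
  obtain ⟨hr_range, hr_eq⟩ := cbrt_lt_and_radialSum_eq_one ha hb hμ hr.le hφ hra hrb
  exact ⟨r * cos φ, by positivity, r * sin φ, by positivity, anisoCC_polar_rectangle hr hφ hra hrb,
    r, hr, φ, hφ, rfl, rfl,
    ⟨hφab, fun φ' hφ' h => strictMonoOn_angleRatio.injOn hφ' hφ (h.trans hφab.symm)⟩,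
    hr_range, hr_eq, fun r' hr' h => injOn_radialSum ha hb hμ hr' hr_range (h.trans hr_eq.symm)⟩

/-- for `a, b > 0` and four equal masses `μ = 1/4`, there is an anisotropic
central configuration forming a rectangle `(±x, ±y)` symmetric with respect to both
coordinate axes; writing `x = r cos φ`, `y = r sin φ` with `φ ∈ (0, π/2)`, the angle `φ`
is the unique solution in `(0, π/2)` of `tan³φ (cos³φ + 1)/(sin³φ + 1) = a/b`, the
half-diagonal `r` satisfies `r > (μ/(2 min{a,b}))^{1/3}`, and in that range `r` is the
unique solution of `(μ/(4ar³−μ))^{2/3} + (μ/(4br³−μ))^{2/3} = 1`. -/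
theorem stmt18 (a b μ : ℝ) (ha : 0 < a) (hb : 0 < b) (hμ : 0 < μ) (hμ1 : 4 * μ = 1) :
    ∃ x > (0 : ℝ), ∃ y > (0 : ℝ),
      AnisoCC a b (fun _ : Fin 4 => μ) ![pt x y, pt x (-y), pt (-x) (-y), pt (-x) y] ∧
      ∃ r > (0 : ℝ), ∃ φ ∈ Set.Ioo (0 : ℝ) (Real.pi / 2),
        x = r * Real.cos φ ∧ y = r * Real.sin φ ∧
        (Real.tan φ ^ 3 * ((Real.cos φ ^ 3 + 1) / (Real.sin φ ^ 3 + 1)) = a / b ∧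
          ∀ φ' ∈ Set.Ioo (0 : ℝ) (Real.pi / 2),
            Real.tan φ' ^ 3 * ((Real.cos φ' ^ 3 + 1) / (Real.sin φ' ^ 3 + 1)) = a / b →
            φ' = φ) ∧
        ((μ / (2 * min a b)) ^ ((1 : ℝ) / 3) < r ∧
          (μ / (4 * a * r ^ 3 - μ)) ^ ((2 : ℝ) / 3) +
            (μ / (4 * b * r ^ 3 - μ)) ^ ((2 : ℝ) / 3) = 1 ∧
          ∀ r' : ℝ, (μ / (2 * min a b)) ^ ((1 : ℝ) / 3) < r' →
            (μ / (4 * a * r' ^ 3 - μ)) ^ ((2 : ℝ) / 3) +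
              (μ / (4 * b * r' ^ 3 - μ)) ^ ((2 : ℝ) / 3) = 1 →
            r' = r) :=
  stmt18_general a b μ ha hb hμ
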